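/- Let F : ℝ^d → ℝ be differentiable with L-Lipschitz continuous gradient (L ≥ 0), let ν > 0, and let x ∈ ℝ^d. Let H be a symmetric positive-definite d×d real matrix with smallest eigenvalue λ_min > 0 and largest eigenvalue λ_max. If ‖∇F(x)‖ > (λ_max · L · ν · √d) / (2 · λ_min), then (H ∇^FD F(x))ᵀ (H ∇F(x)) > 0; i.e., the finite-difference quasi-Newton direction makes an acute angle with the true quasi-Newton direction. -/

import Mathlib

/-!
Applied to `v = ν eⱼ`, the descent lemma `|F (x + v) - F x - ⟪∇F x, v⟫| ≤ L ‖v‖² / 2` bounds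
every coordinate of the finite-difference error `e = ∇ᶠᴰF x - ∇F x` by `L ν / 2`, hence
`‖e‖ ≤ L ν √d / 2`. In an orthonormal eigenbasis of `H` one reads off
`λ_min ‖w‖ ≤ ‖H w‖ ≤ λ_max ‖w‖`, so the hypothesis on `‖∇F x‖` gives `‖H e‖ < ‖H ∇F x‖`, and a
vector `v` with `‖v - u‖ < ‖u‖` always makes an acute angle with `u`.
-/

open MeasureTheory
open scoped RealInnerProductSpace

noncomputable def fdGrad {d : ℕ} (ν : ℝ) (g : EuclideanSpace ℝ (Fin d) → ℝ)
    (x : EuclideanSpace ℝ (Fin d)) : EuclideanSpace ℝ (Fin d) :=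
  (WithLp.equiv 2 (Fin d → ℝ)).symm
    fun j => (g (x + ν • EuclideanSpace.single j (1:ℝ)) - g x) / ν


noncomputable def mApp {d : ℕ} (H : Matrix (Fin d) (Fin d) ℝ) :
    EuclideanSpace ℝ (Fin d) →L[ℝ] EuclideanSpace ℝ (Fin d) :=
  Matrix.toEuclideanCLM (𝕜 := ℝ) H

section InnerProductSpace

variable {E : Type*} [NormedAddCommGroup E] [InnerProductSpace ℝ E]

theorem real_inner_pos_of_norm_sub_lt {u v : E} (h : ‖v - u‖ < ‖u‖) : 0 < ⟪v, u⟫ := by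
  have hu : 0 < ‖u‖ := (norm_nonneg _).trans_lt h
  have hvu : -(‖v - u‖ * ‖u‖) ≤ ⟪v - u, u⟫ := (abs_le.1 (abs_real_inner_le_norm _ _)).1
  rw [inner_sub_left, real_inner_self_eq_norm_sq] at hvu
  nlinarith

variable [CompleteSpace E]

theorem hasDerivAt_comp_add_smul {F : E → ℝ} (hF : Differentiable ℝ F) (x v : E) (t : ℝ) :
    HasDerivAt (fun s : ℝ => F (x + s • v)) ⟪gradient F (x + t • v), v⟫ t := by
  have hline : HasDerivAt (fun s : ℝ => x + s • v) v t := by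
    simpa using ((hasDerivAt_id t).smul_const v).const_add x
  exact (hF (x + t • v)).hasGradientAt.hasFDerivAt.comp_hasDerivAt t hline

theorem abs_sub_sub_inner_gradient_le {F : E → ℝ} {L : ℝ} (hF : Differentiable ℝ F)
    (hLip : ∀ x y, ‖gradient F x - gradient F y‖ ≤ L * ‖x - y‖) (x v : E) :
    |F (x + v) - F x - ⟪gradient F x, v⟫| ≤ L / 2 * ‖v‖ ^ 2 := by
  have hf (t : ℝ) : HasDerivAt (fun s => F (x + s • v) - F x - s * ⟪gradient F x, v⟫)
      (⟪gradient F (x + t • v), v⟫ - 1 * ⟪gradient F x, v⟫) t :=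
    ((hasDerivAt_comp_add_smul hF x v t).sub_const (F x)).sub
      ((hasDerivAt_id t).mul_const ⟪gradient F x, v⟫)
  have hB (t : ℝ) : HasDerivAt (fun s => L / 2 * s ^ 2 * ‖v‖ ^ 2) (L * t * ‖v‖ ^ 2) t :=
    (((hasDerivAt_pow 2 t).const_mul (L / 2)).mul_const (‖v‖ ^ 2)).congr_deriv (by ring)
  have bound : ∀ t ∈ Set.Ico (0 : ℝ) 1,
      ‖⟪gradient F (x + t • v), v⟫ - 1 * ⟪gradient F x, v⟫‖ ≤ L * t * ‖v‖ ^ 2 := fun t ht => by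
    calc ‖⟪gradient F (x + t • v), v⟫ - 1 * ⟪gradient F x, v⟫‖
        = ‖⟪gradient F (x + t • v) - gradient F x, v⟫‖ := by rw [one_mul, inner_sub_left]
      _ ≤ ‖gradient F (x + t • v) - gradient F x‖ * ‖v‖ := norm_inner_le_norm _ _
      _ ≤ L * ‖x + t • v - x‖ * ‖v‖ := by gcongr; exact hLip _ _
      _ = L * t * ‖v‖ ^ 2 := by
        rw [add_sub_cancel_left, norm_smul, Real.norm_of_nonneg ht.1]; ring
  simpa using image_norm_le_of_norm_deriv_right_le_deriv_boundary
    (fun t _ => (hf t).continuousAt.continuousWithinAt) (fun t _ => (hf t).hasDerivWithinAt)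
    (by simp) hB bound (Set.right_mem_Icc.2 zero_le_one)

end InnerProductSpace

theorem EuclideanSpace.norm_le_sqrt_card_mul {ι : Type*} [Fintype ι] {x : EuclideanSpace ℝ ι}
    {c : ℝ} (hc0 : 0 ≤ c) (hc : ∀ i, |x i| ≤ c) : ‖x‖ ≤ √(Fintype.card ι) * c := by
  rw [EuclideanSpace.norm_eq, ← Real.sqrt_sq hc0, ← Real.sqrt_mul (Nat.cast_nonneg _)]
  refine Real.sqrt_le_sqrt ?_
  calc ∑ i, ‖x i‖ ^ 2 ≤ ∑ _i : ι, c ^ 2 :=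
        Finset.sum_le_sum fun i _ => by
          rw [Real.norm_eq_abs]
          exact pow_le_pow_left₀ (abs_nonneg _) (hc i) 2
    _ = Fintype.card ι * c ^ 2 := by simp

section FiniteDifference

variable {d : ℕ} {F : EuclideanSpace ℝ (Fin d) → ℝ} {L ν : ℝ}

theorem abs_fdGrad_sub_gradient_apply_le (hF : Differentiable ℝ F)
    (hLip : ∀ x y, ‖gradient F x - gradient F y‖ ≤ L * ‖x - y‖) (hν : ν ≠ 0)
    (x : EuclideanSpace ℝ (Fin d)) (j : Fin d) :
    |(fdGrad ν F x - gradient F x) j| ≤ L * |ν| / 2 := by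
  set v : EuclideanSpace ℝ (Fin d) := ν • EuclideanSpace.single j 1
  have hv : ‖v‖ = |ν| := by simp [v, norm_smul]
  have hinner : ⟪gradient F x, v⟫ = ν * gradient F x j := by
    rw [real_inner_smul_right, EuclideanSpace.inner_single_right]
    simp
  have hcoord :
      (fdGrad ν F x - gradient F x) j = (F (x + v) - F x - ⟪gradient F x, v⟫) / ν := by
    rw [hinner]
    change (F (x + v) - F x) / ν - gradient F x j = _
    field_simp
  rw [hcoord, abs_div, div_le_iff₀ (abs_pos.2 hν)]
  calc |F (x + v) - F x - ⟪gradient F x, v⟫| ≤ L / 2 * ‖v‖ ^ 2 :=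
        abs_sub_sub_inner_gradient_le hF hLip x v
    _ = L * |ν| / 2 * |ν| := by rw [hv]; ring

theorem norm_fdGrad_sub_gradient_le (hL : 0 ≤ L) (hF : Differentiable ℝ F)
    (hLip : ∀ x y, ‖gradient F x - gradient F y‖ ≤ L * ‖x - y‖) (hν : ν ≠ 0)
    (x : EuclideanSpace ℝ (Fin d)) :
    ‖fdGrad ν F x - gradient F x‖ ≤ L * |ν| * √d / 2 := by
  have := EuclideanSpace.norm_le_sqrt_card_mul (by positivity)
    (abs_fdGrad_sub_gradient_apply_le hF hLip hν x)
  rw [Fintype.card_fin] at this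
  linarith

end FiniteDifference

namespace Matrix.IsHermitian

variable {n : Type*} [Fintype n] [DecidableEq n] {A : Matrix n n ℝ} (hA : A.IsHermitian)

theorem toEuclideanCLM_eigenvectorBasis (j : n) :
    toEuclideanCLM (𝕜 := ℝ) A (hA.eigenvectorBasis j) =
      hA.eigenvalues j • hA.eigenvectorBasis j :=
  WithLp.ofLp_injective 2 <| (ofLp_toEuclideanCLM A _).trans (hA.mulVec_eigenvectorBasis j)

theorem inner_eigenvectorBasis_toEuclideanCLM (w : EuclideanSpace ℝ n) (j : n) :
    ⟪hA.eigenvectorBasis j, toEuclideanCLM (𝕜 := ℝ) A w⟫ =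
      hA.eigenvalues j * ⟪hA.eigenvectorBasis j, w⟫ := by
  rw [← real_inner_smul_left, ← toEuclideanCLM_eigenvectorBasis hA]
  exact (isSymmetric_toEuclideanLin_iff.2 hA _ _).symm

theorem norm_toEuclideanCLM_sq (w : EuclideanSpace ℝ n) :
    ‖toEuclideanCLM (𝕜 := ℝ) A w‖ ^ 2 =
      ∑ j, hA.eigenvalues j ^ 2 * ⟪hA.eigenvectorBasis j, w⟫ ^ 2 := by
  simp_rw [← hA.eigenvectorBasis.sum_sq_inner_right, inner_eigenvectorBasis_toEuclideanCLM hA,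
    mul_pow]

theorem norm_toEuclideanCLM_le {c : ℝ} (hc0 : 0 ≤ c) (hc : ∀ j, |hA.eigenvalues j| ≤ c)
    (w : EuclideanSpace ℝ n) :
    ‖toEuclideanCLM (𝕜 := ℝ) A w‖ ≤ c * ‖w‖ := by
  refine le_of_sq_le_sq ?_ (by positivity)
  rw [mul_pow, norm_toEuclideanCLM_sq hA, ← hA.eigenvectorBasis.sum_sq_inner_right,
    Finset.mul_sum]
  refine Finset.sum_le_sum fun j _ => mul_le_mul_of_nonneg_right ?_ (sq_nonneg _)
  exact sq_le_sq' (abs_le.1 (hc j)).1 (abs_le.1 (hc j)).2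

theorem le_norm_toEuclideanCLM {c : ℝ} (hc0 : 0 ≤ c) (hc : ∀ j, c ≤ |hA.eigenvalues j|)
    (w : EuclideanSpace ℝ n) :
    c * ‖w‖ ≤ ‖toEuclideanCLM (𝕜 := ℝ) A w‖ := by
  refine le_of_sq_le_sq ?_ (by positivity)
  rw [mul_pow, norm_toEuclideanCLM_sq hA, ← hA.eigenvectorBasis.sum_sq_inner_right,
    Finset.mul_sum]
  refine Finset.sum_le_sum fun j _ => mul_le_mul_of_nonneg_right ?_ (sq_nonneg _)
  rw [← sq_abs (hA.eigenvalues j)]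
  exact pow_le_pow_left₀ hc0 (hc j) 2

end Matrix.IsHermitian

theorem stmt7_general {d : ℕ} (L ν : ℝ) (hL : 0 ≤ L) (hν : 0 < ν)
    (F : EuclideanSpace ℝ (Fin d) → ℝ) (hF : Differentiable ℝ F)
    (hLip : ∀ x y, ‖gradient F x - gradient F y‖ ≤ L * ‖x - y‖)
    (x : EuclideanSpace ℝ (Fin d))
    (H : Matrix (Fin d) (Fin d) ℝ) (hH : H.IsHermitian)
    (lamMin lamMax : ℝ) (hlamMin : 0 < lamMin)
    (hMin : IsLeast (Set.range hH.eigenvalues) lamMin)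
    (hMax : IsGreatest (Set.range hH.eigenvalues) lamMax)
    (hgrad : ‖gradient F x‖ > lamMax * L * ν * Real.sqrt d / (2 * lamMin)) :
    0 < ⟪mApp H (fdGrad ν F x), mApp H (gradient F x)⟫ := by
  have hlamMax : 0 ≤ lamMax := hlamMin.le.trans (hMin.2 hMax.1)
  have habs_le : ∀ j, |hH.eigenvalues j| ≤ lamMax := fun j => by
    rw [abs_of_pos (hlamMin.trans_le (hMin.2 ⟨j, rfl⟩))]
    exact hMax.2 ⟨j, rfl⟩
  have hle_abs : ∀ j, lamMin ≤ |hH.eigenvalues j| := fun j =>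
    (hMin.2 ⟨j, rfl⟩).trans (le_abs_self _)
  have hthreshold : lamMax * (L * ν * √d / 2) < lamMin * ‖gradient F x‖ := by
    rw [gt_iff_lt, div_lt_iff₀ (by positivity)] at hgrad
    linarith
  refine real_inner_pos_of_norm_sub_lt ?_
  rw [← map_sub]
  calc ‖mApp H (fdGrad ν F x - gradient F x)‖
      ≤ lamMax * ‖fdGrad ν F x - gradient F x‖ := hH.norm_toEuclideanCLM_le hlamMax habs_le _
    _ ≤ lamMax * (L * ν * √d / 2) := by
      gcongr
      simpa [abs_of_pos hν] using norm_fdGrad_sub_gradient_le hL hF hLip hν.ne' x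
    _ < lamMin * ‖gradient F x‖ := hthreshold
    _ ≤ ‖mApp H (gradient F x)‖ := hH.le_norm_toEuclideanCLM hlamMin.le hle_abs _

theorem stmt7 {d : ℕ} (L ν : ℝ) (hL : 0 ≤ L) (hν : 0 < ν)
    (F : EuclideanSpace ℝ (Fin d) → ℝ) (hF : Differentiable ℝ F)
    (hLip : ∀ x y, ‖gradient F x - gradient F y‖ ≤ L * ‖x - y‖)
    (x : EuclideanSpace ℝ (Fin d))
    (H : Matrix (Fin d) (Fin d) ℝ) (hH : H.IsHermitian) (hPD : H.PosDef)
    (lamMin lamMax : ℝ) (hlamMin : 0 < lamMin)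
    (hMin : IsLeast (Set.range hH.eigenvalues) lamMin)
    (hMax : IsGreatest (Set.range hH.eigenvalues) lamMax)
    (hgrad : ‖gradient F x‖ > lamMax * L * ν * Real.sqrt d / (2 * lamMin)) :
    0 < ⟪mApp H (fdGrad ν F x), mApp H (gradient F x)⟫ :=
  stmt7_general L ν hL hν F hF hLip x H hH lamMin lamMax hlamMin hMin hMax hgrad
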